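/- arXiv:2503.07665 — 2 statements merged into one kernel-verified Lean document; each statement's English description precedes it below -/
import Mathlib

section
/- Under the hypotheses of the distance-preservation setting (G' induced subgraph of G containing X, and every component H of G − X either entirely inside G' or entirely outside with at least two isomorphic copies H', H'' inside G', where the isomorphisms preserve adjacency to X and ball membership), the map sending each ball B_r(u) of G with u ∈ V(G') to B_r(u) ∩ V(G') is injective, and each such intersection is itself a ball of radius r around u in G'. -/
/-- The ball of radius `r` around `v`: vertices reachable by a walk of length at most `r`. -/
def graphBall {V : Type*} (G : SimpleGraph V) (v : V) (r : ℕ) : Set V :=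
  {w | ∃ p : G.Walk v w, p.length ≤ r}

/-- The support of a connected component of `G − X`, as a set of vertices of `G`. -/
def compSupp {V : Type*} (G : SimpleGraph V) (X : Set V)
    (c : (G.induce (Xᶜ : Set V)).ConnectedComponent) : Set V :=
  Subtype.val '' c.supp

/-!
If every neighbour of a vertex set `C` outside `C` lies in `X`, a map on `C` preserving adjacency
inside `C` and towards `X` extends by the identity to an endomorphism of `G`, and endomorphisms
do not lengthen walks. For a component `H` of `G − X` disjoint from `S` and a copy `H'` of it
inside `S`, this moves walks off `H` while fixing their endpoints outside `H`; applied one step at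
a time, it pushes a walk between vertices of `S` into `S`. For injectivity, a vertex `w ∈ H` of
`B_r(u)` has its copy in `B_r(u) ∩ S = B_{r'}(v) ∩ S`, and for the copy `H'` avoiding `v` the
inverse isomorphism carries a walk from `v` back to `w`.
-/

open SimpleGraph

section

variable {V : Type*} {G : SimpleGraph V} {X S : Set V}

lemma mem_graphBall_map {W : Type*} {H : SimpleGraph W} (φ : G →g H) {u w : V} {r : ℕ}
    (hw : w ∈ graphBall G u r) : φ w ∈ graphBall H (φ u) r := by
  obtain ⟨p, hp⟩ := hw
  exact ⟨p.map φ, (p.length_map φ).trans_le hp⟩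

lemma exists_hom_extend_id {C : Set V} (hC : ∀ a ∈ C, ∀ b ∉ C, G.Adj a b → b ∈ X)
    (f : C → V) (hadj : ∀ a b : C, G.Adj a b → G.Adj (f a) (f b))
    (hX : ∀ (a : C) (x : V), x ∈ X → G.Adj a x → G.Adj (f a) x) :
    ∃ φ : G →g G, (∀ a : C, φ a = f a) ∧ ∀ v ∉ C, φ v = v := by
  classical
  let φ : V → V := fun v => if h : v ∈ C then f ⟨v, h⟩ else v
  have hφC : ∀ a : C, φ a = f a := fun a => dif_pos a.2
  have hφ : ∀ v ∉ C, φ v = v := fun v hv => dif_neg hv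
  have hφ_adj : ∀ (a : C) (b : V), G.Adj a b → G.Adj (φ a) (φ b) := by
    intro a b hab
    by_cases hb : b ∈ C
    · rw [hφC, hφC ⟨b, hb⟩]
      exact hadj a ⟨b, hb⟩ hab
    · rw [hφC, hφ b hb]
      exact hX a b (hC a a.2 b hb hab) hab
  refine ⟨⟨φ, fun {a b} hab => ?_⟩, hφC, hφ⟩
  by_cases ha : a ∈ C
  · exact hφ_adj ⟨a, ha⟩ b hab
  by_cases hb : b ∈ C
  · exact (hφ_adj ⟨b, hb⟩ a hab.symm).symm
  · rw [hφ a ha, hφ b hb]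
    exact hab

lemma image_val_graphBall_induce_subset (u : S) (r : ℕ) :
    Subtype.val '' graphBall (G.induce S) u r ⊆ graphBall G u r := by
  rintro _ ⟨w, hw, rfl⟩
  exact mem_graphBall_map (Embedding.induce S).toHom hw

lemma graphBall_inter_subset_image_induce
    (hstep : ∀ ⦃u y w : V⦄ ⦃r : ℕ⦄, u ∈ S → w ∈ S → G.Adj u y → w ∈ graphBall G y r →
      ∃ y' ∈ S, G.Adj u y' ∧ w ∈ graphBall G y' r)
    {u : V} (hu : u ∈ S) (r : ℕ) :
    graphBall G u r ∩ S ⊆ Subtype.val '' graphBall (G.induce S) ⟨u, hu⟩ r := by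
  induction r generalizing u with
  | zero =>
    rintro w ⟨⟨p, hp⟩, hw⟩
    obtain rfl := (Walk.eq_of_length_eq_zero (Nat.le_zero.1 hp))
    exact ⟨⟨u, hu⟩, ⟨Walk.nil, le_rfl⟩, rfl⟩
  | succ r ih =>
    rintro w ⟨⟨p, hp⟩, hw⟩
    cases p with
    | nil => exact ⟨⟨u, hu⟩, ⟨Walk.nil, Nat.zero_le _⟩, rfl⟩
    | @cons _ y _ huy q =>
      rw [Walk.length_cons, Nat.add_le_add_iff_right] at hp
      obtain ⟨y', hy', huy', hwy'⟩ := hstep hu hw huy ⟨q, hp⟩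
      obtain ⟨w', ⟨q', hq'⟩, rfl⟩ := ih hy' ⟨hwy', hw⟩
      exact ⟨w', ⟨Walk.cons (show (G.induce S).Adj ⟨u, hu⟩ ⟨y', hy'⟩ from huy') q',
        by rw [Walk.length_cons]; omega⟩, rfl⟩

lemma mem_compSupp {c : (G.induce Xᶜ).ConnectedComponent} {z : V} :
    z ∈ compSupp G X c ↔ ∃ h : z ∉ X, (G.induce Xᶜ).connectedComponentMk ⟨z, h⟩ = c := by
  simp only [compSupp, Set.mem_image, ConnectedComponent.mem_supp_iff, Subtype.exists,
    exists_and_right, exists_eq_right]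
  rfl

lemma mem_compSupp_connectedComponentMk {z : V} (hz : z ∉ X) :
    z ∈ compSupp G X ((G.induce Xᶜ).connectedComponentMk ⟨z, hz⟩) :=
  mem_compSupp.2 ⟨hz, rfl⟩

lemma eq_of_mem_compSupp {c c' : (G.induce Xᶜ).ConnectedComponent} {z : V}
    (h : z ∈ compSupp G X c) (h' : z ∈ compSupp G X c') : c = c' := by
  obtain ⟨_, rfl⟩ := mem_compSupp.1 h
  obtain ⟨_, rfl⟩ := mem_compSupp.1 h'
  rfl

lemma mem_of_adj_of_mem_compSupp {c : (G.induce Xᶜ).ConnectedComponent} {a b : V}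
    (ha : a ∈ compSupp G X c) (hab : G.Adj a b) (hb : b ∉ compSupp G X c) : b ∈ X := by
  by_contra hbX
  obtain ⟨haX, rfl⟩ := mem_compSupp.1 ha
  have : (G.induce Xᶜ).Adj ⟨a, haX⟩ ⟨b, hbX⟩ := hab
  exact hb (mem_compSupp.2 ⟨hbX, (ConnectedComponent.connectedComponentMk_eq_of_adj this).symm⟩)

variable (G X) in
def IsCopy {C D : Set V} (γ : C ≃ D) : Prop :=
  (∀ a b : C, G.Adj a b ↔ G.Adj (γ a) (γ b)) ∧
    ∀ (a : C) (x : V), x ∈ X → (G.Adj a x ↔ G.Adj (γ a) x)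

lemma IsCopy.symm {C D : Set V} {γ : C ≃ D} (hγ : IsCopy G X γ) : IsCopy G X γ.symm :=
  ⟨fun a b => by simpa using (hγ.1 (γ.symm a) (γ.symm b)).symm,
    fun a x hx => by simpa using (hγ.2 (γ.symm a) x hx).symm⟩

lemma IsCopy.exists_hom {c : (G.induce Xᶜ).ConnectedComponent} {D : Set V}
    {γ : compSupp G X c ≃ D} (hγ : IsCopy G X γ) :
    ∃ φ : G →g G, (∀ a : compSupp G X c, φ a = γ a) ∧ ∀ v ∉ compSupp G X c, φ v = v :=
  exists_hom_extend_id (X := X) (fun _ ha _ hb hab => mem_of_adj_of_mem_compSupp ha hab hb)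
    (fun a => γ a) (fun a b => (hγ.1 a b).1) (fun a x hx => (hγ.2 a x hx).1)

lemma exists_adj_mem_graphBall_of_isCopy {c c' : (G.induce Xᶜ).ConnectedComponent}
    (hcS : compSupp G X c ∩ S = ∅) (hc'S : compSupp G X c' ⊆ S)
    {γ : compSupp G X c ≃ compSupp G X c'} (hγ : IsCopy G X γ) {u y w : V} {r : ℕ}
    (hu : u ∈ S) (hw : w ∈ S) (hyc : y ∈ compSupp G X c) (huy : G.Adj u y)
    (hyw : w ∈ graphBall G y r) : ∃ y' ∈ S, G.Adj u y' ∧ w ∈ graphBall G y' r := by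
  obtain ⟨φ, hφc, hφ⟩ := hγ.exists_hom
  have hφS : ∀ v ∈ S, φ v = v := fun v hv =>
    hφ v fun hvc => Set.eq_empty_iff_forall_notMem.1 hcS v ⟨hvc, hv⟩
  refine ⟨φ y, hφc ⟨y, hyc⟩ ▸ hc'S (γ ⟨y, hyc⟩).2, ?_, ?_⟩
  · simpa only [hφS u hu] using φ.map_adj huy
  · simpa only [hφS w hw] using mem_graphBall_map φ hyw

lemma graphBall_inter_eq_image_induce (hXS : X ⊆ S)
    (hcopy : ∀ c : (G.induce Xᶜ).ConnectedComponent, compSupp G X c ⊆ S ∨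
      (compSupp G X c ∩ S = ∅ ∧ ∃ c', compSupp G X c' ⊆ S ∧
        ∃ γ : compSupp G X c ≃ compSupp G X c', IsCopy G X γ))
    {u : V} (hu : u ∈ S) (r : ℕ) :
    graphBall G u r ∩ S = Subtype.val '' graphBall (G.induce S) ⟨u, hu⟩ r := by
  refine (graphBall_inter_subset_image_induce (fun u y w r hu hw huy hyw => ?_) hu r).antisymm
    (Set.subset_inter (image_val_graphBall_induce_subset _ r) (by simp))
  by_cases hy : y ∈ S
  · exact ⟨y, hy, huy, hyw⟩
  have hyc := mem_compSupp_connectedComponentMk (G := G) fun h => hy (hXS h)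
  rcases hcopy _ with hcS | ⟨hcS, c', hc'S, γ, hγ⟩
  · exact absurd (hcS hyc) hy
  · exact exists_adj_mem_graphBall_of_isCopy hcS hc'S hγ hu hw hyc huy hyw

lemma mem_graphBall_of_isCopy {c c₀ : (G.induce Xᶜ).ConnectedComponent}
    (hcS : compSupp G X c ∩ S = ∅) (hc₀S : compSupp G X c₀ ⊆ S)
    {γ : compSupp G X c ≃ compSupp G X c₀} (hγ : IsCopy G X γ) {u v w : V} {r r' : ℕ}
    (hu : u ∈ S) (hv : v ∉ compSupp G X c₀)
    (hsub : graphBall G u r ∩ S ⊆ graphBall G v r' ∩ S)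
    (hwc : w ∈ compSupp G X c) (hw : w ∈ graphBall G u r) : w ∈ graphBall G v r' := by
  obtain ⟨φ, hφc, hφ⟩ := hγ.exists_hom
  obtain ⟨ψ, hψc, hψ⟩ := hγ.symm.exists_hom
  have hγw : (γ ⟨w, hwc⟩ : V) ∈ graphBall G v r' := by
    have hφu : φ u = u := hφ u fun huc => Set.eq_empty_iff_forall_notMem.1 hcS u ⟨huc, hu⟩
    have := mem_graphBall_map φ hw
    rw [hφu, hφc ⟨w, hwc⟩] at this
    exact (hsub ⟨this, hc₀S (γ ⟨w, hwc⟩).2⟩).1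
  have := mem_graphBall_map ψ hγw
  rwa [hψ v hv, hψc (γ ⟨w, hwc⟩), Equiv.symm_apply_apply] at this

lemma graphBall_subset_of_inter_subset (hXS : X ⊆ S)
    (hcopies : ∀ c : (G.induce Xᶜ).ConnectedComponent, compSupp G X c ⊆ S ∨
      (compSupp G X c ∩ S = ∅ ∧ ∃ c' c'', c' ≠ c'' ∧
        compSupp G X c' ⊆ S ∧ compSupp G X c'' ⊆ S ∧
        (∃ γ : compSupp G X c ≃ compSupp G X c', IsCopy G X γ) ∧
        ∃ γ : compSupp G X c ≃ compSupp G X c'', IsCopy G X γ))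
    {u v : V} {r r' : ℕ} (hu : u ∈ S)
    (hsub : graphBall G u r ∩ S ⊆ graphBall G v r' ∩ S) :
    graphBall G u r ⊆ graphBall G v r' := by
  intro w hw
  by_cases hwS : w ∈ S
  · exact (hsub ⟨hw, hwS⟩).1
  have hwc := mem_compSupp_connectedComponentMk (G := G) fun h => hwS (hXS h)
  rcases hcopies _ with hcS | ⟨hcS, c', c'', hne, hc'S, hc''S, ⟨γ', hγ'⟩, γ'', hγ''⟩
  · exact absurd (hcS hwc) hwS
  -- `v` lies in at most one of the two copies; use the other one
  by_cases hv : v ∈ compSupp G X c'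
  · have hv' : v ∉ compSupp G X c'' := fun hv' => hne (eq_of_mem_compSupp hv hv')
    exact mem_graphBall_of_isCopy hcS hc''S hγ'' hu hv' hsub hwc hw
  · exact mem_graphBall_of_isCopy hcS hc'S hγ' hu hv hsub hwc hw

end

theorem stmt_10_general {V : Type*} (G : SimpleGraph V) (𝓑 : Set (Set V))
    (S X : Set V) (hXS : X ⊆ S)
    (hcomp : ∀ c : (G.induce (Xᶜ : Set V)).ConnectedComponent,
      compSupp G X c ⊆ S ∨
      (compSupp G X c ∩ S = ∅ ∧
        ∃ c' c'' : (G.induce (Xᶜ : Set V)).ConnectedComponent, c' ≠ c'' ∧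
          compSupp G X c' ⊆ S ∧ compSupp G X c'' ⊆ S ∧
          (∃ α : (compSupp G X c) ≃ (compSupp G X c'),
            (∀ u v : compSupp G X c, G.Adj u v ↔ G.Adj (α u) (α v)) ∧
            (∀ (u : compSupp G X c) (x : V), x ∈ X → (G.Adj u x ↔ G.Adj (α u) x)) ∧
            (∀ (u : compSupp G X c) (r : ℕ),
              graphBall G u r ∈ 𝓑 ↔ graphBall G (α u) r ∈ 𝓑)) ∧
          (∃ β : (compSupp G X c) ≃ (compSupp G X c''),
            (∀ u v : compSupp G X c, G.Adj u v ↔ G.Adj (β u) (β v)) ∧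
            (∀ (u : compSupp G X c) (x : V), x ∈ X → (G.Adj u x ↔ G.Adj (β u) x)) ∧
            (∀ (u : compSupp G X c) (r : ℕ),
              graphBall G u r ∈ 𝓑 ↔ graphBall G (β u) r ∈ 𝓑)))) :
    (∀ (u : V) (hu : u ∈ S) (r : ℕ),
      graphBall G u r ∩ S = Subtype.val '' graphBall (G.induce S) ⟨u, hu⟩ r) ∧
    (∀ (u v : V), u ∈ S → v ∈ S → ∀ (r r' : ℕ),
      graphBall G u r ∈ 𝓑 → graphBall G v r' ∈ 𝓑 →
      graphBall G u r ∩ S = graphBall G v r' ∩ S →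
      graphBall G u r = graphBall G v r') := by
  have hcopies : ∀ c, compSupp G X c ⊆ S ∨
      (compSupp G X c ∩ S = ∅ ∧ ∃ c' c'', c' ≠ c'' ∧
        compSupp G X c' ⊆ S ∧ compSupp G X c'' ⊆ S ∧
        (∃ γ : compSupp G X c ≃ compSupp G X c', IsCopy G X γ) ∧
        ∃ γ : compSupp G X c ≃ compSupp G X c'', IsCopy G X γ) := fun c =>
    (hcomp c).imp_right fun ⟨hcS, c', c'', hne, hc'S, hc''S, ⟨γ', hγ'₁, hγ'₂, _⟩,
        γ'', hγ''₁, hγ''₂, _⟩ =>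
      ⟨hcS, c', c'', hne, hc'S, hc''S, ⟨γ', hγ'₁, hγ'₂⟩, γ'', hγ''₁, hγ''₂⟩
  refine ⟨fun u hu r => graphBall_inter_eq_image_induce hXS (fun c => (hcopies c).imp_right
    fun ⟨hcS, c', _, _, hc'S, _, hγ', _⟩ => ⟨hcS, c', hc'S, hγ'⟩) hu r, ?_⟩
  intro u v hu hv r r' _ _ heq
  exact (graphBall_subset_of_inter_subset hXS hcopies hu heq.le).antisymm
    (graphBall_subset_of_inter_subset hXS hcopies hv heq.ge)

/-- In the distance-preservation setting (each component of `G − X` is inside `S`, or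
disjoint from `S` with two isomorphic copies inside `S`, the isomorphisms preserving
adjacency to `X` and membership of balls in `𝓑`), intersecting a ball of `G` centered in
`S` with `S` yields a ball of the induced graph, and this assignment is injective on `𝓑`. -/
theorem stmt_10 {V : Type*} [Fintype V] (G : SimpleGraph V) (hG : G.Connected)
    (𝓑 : Set (Set V)) (h𝓑 : ∀ B ∈ 𝓑, ∃ (v : V) (r : ℕ), B = graphBall G v r)
    (S X : Set V) (hXS : X ⊆ S)
    (hcomp : ∀ c : (G.induce (Xᶜ : Set V)).ConnectedComponent,
      compSupp G X c ⊆ S ∨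
      (compSupp G X c ∩ S = ∅ ∧
        ∃ c' c'' : (G.induce (Xᶜ : Set V)).ConnectedComponent, c' ≠ c'' ∧
          compSupp G X c' ⊆ S ∧ compSupp G X c'' ⊆ S ∧
          (∃ α : (compSupp G X c) ≃ (compSupp G X c'),
            (∀ u v : compSupp G X c, G.Adj u v ↔ G.Adj (α u) (α v)) ∧
            (∀ (u : compSupp G X c) (x : V), x ∈ X → (G.Adj u x ↔ G.Adj (α u) x)) ∧
            (∀ (u : compSupp G X c) (r : ℕ),
              graphBall G u r ∈ 𝓑 ↔ graphBall G (α u) r ∈ 𝓑)) ∧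
          (∃ β : (compSupp G X c) ≃ (compSupp G X c''),
            (∀ u v : compSupp G X c, G.Adj u v ↔ G.Adj (β u) (β v)) ∧
            (∀ (u : compSupp G X c) (x : V), x ∈ X → (G.Adj u x ↔ G.Adj (β u) x)) ∧
            (∀ (u : compSupp G X c) (r : ℕ),
              graphBall G u r ∈ 𝓑 ↔ graphBall G (β u) r ∈ 𝓑)))) :
    (∀ (u : V) (hu : u ∈ S) (r : ℕ),
      graphBall G u r ∩ S = Subtype.val '' graphBall (G.induce S) ⟨u, hu⟩ r) ∧
    (∀ (u v : V), u ∈ S → v ∈ S → ∀ (r r' : ℕ),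
      graphBall G u r ∈ 𝓑 → graphBall G v r' ∈ 𝓑 →
      graphBall G u r ∩ S = graphBall G v r' ∩ S →
      graphBall G u r = graphBall G v r') :=
  stmt_10_general G 𝓑 S X hXS hcomp
end

section
/- Let T be a positive non-clashing teaching map for the set 𝓑 of all balls of radius at most 1 in a graph G (i.e., all singletons B₀(v) and closed neighborhoods B₁(v)). Suppose u, v are distinct vertices with B₁(u) ⊆ B₁(v) and |B₁(v) \ B₁(u)| = 2, say B₁(v) \ B₁(u) = {a, b}. If additionally there is a vertex w with B₁(w) ⊊ B₁(v) and B₁(v) \ B₁(w) = {c} for some c ∉ {a,b}, and T has dimension at most 2, then T(B₁(v)) = {c, x} with x ∈ {a, b}. -/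
/-- `T` is a positive teaching map for the family of balls `𝓑`. -/
def IsPositiveMap {V : Type*} (𝓑 : Set (Set V)) (T : Set V → Set V) : Prop :=
  ∀ B ∈ 𝓑, T B ⊆ B

/-- `T` is non-clashing for `𝓑`. -/
def IsNonClashing {V : Type*} (𝓑 : Set (Set V)) (T : Set V → Set V) : Prop :=
  ∀ B₁ ∈ 𝓑, ∀ B₂ ∈ 𝓑, B₁ ≠ B₂ → ∃ w ∈ T B₁ ∪ T B₂, w ∉ B₁ ∩ B₂

/-- `T B'` lies inside `B' ⊆ B`, so only `T B` can separate the two balls. -/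
theorem IsNonClashing.exists_mem_teach_diff_of_ssubset {V : Type*} {𝓑 : Set (Set V)}
    {T : Set V → Set V} (hpos : IsPositiveMap 𝓑 T) (hnc : IsNonClashing 𝓑 T)
    {B' B : Set V} (hB' : B' ∈ 𝓑) (hB : B ∈ 𝓑) (hlt : B' ⊂ B) :
    ∃ x ∈ T B, x ∈ B \ B' := by
  obtain ⟨x, hxT | hxT, hx⟩ := hnc B' hB' B hB hlt.ne
  · exact absurd ⟨hpos B' hB' hxT, hlt.subset (hpos B' hB' hxT)⟩ hx
  · have hxB : x ∈ B := hpos B hB hxT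
    exact ⟨x, hxT, hxB, fun hxB' => hx ⟨hxB', hxB⟩⟩

theorem IsNonClashing.mem_teach_of_diff_eq_singleton {V : Type*} {𝓑 : Set (Set V)}
    {T : Set V → Set V} (hpos : IsPositiveMap 𝓑 T) (hnc : IsNonClashing 𝓑 T)
    {B' B : Set V} (hB' : B' ∈ 𝓑) (hB : B ∈ 𝓑) (hlt : B' ⊂ B) {c : V} (hc : B \ B' = {c}) :
    c ∈ T B := by
  obtain ⟨x, hxT, hx⟩ := hnc.exists_mem_teach_diff_of_ssubset hpos hB' hB hlt
  rw [hc] at hx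
  rwa [Set.mem_singleton_iff.mp hx] at hxT

theorem IsNonClashing.mem_teach_of_diff_eq_pair {V : Type*} {𝓑 : Set (Set V)}
    {T : Set V → Set V} (hpos : IsPositiveMap 𝓑 T) (hnc : IsNonClashing 𝓑 T)
    {B' B : Set V} (hB' : B' ∈ 𝓑) (hB : B ∈ 𝓑) (hle : B' ⊆ B) {a b : V}
    (hab : B \ B' = {a, b}) : a ∈ T B ∨ b ∈ T B := by
  have hlt : B' ⊂ B := Set.ssubset_iff_exists.mpr ⟨hle, a, (hab ▸ Or.inl rfl : a ∈ B \ B')⟩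
  obtain ⟨x, hxT, hx⟩ := hnc.exists_mem_teach_diff_of_ssubset hpos hB' hB hlt
  rcases (hab ▸ hx : x ∈ ({a, b} : Set V)) with rfl | rfl
  exacts [Or.inl hxT, Or.inr hxT]

theorem Set.eq_pair_of_ncard_le_two {α : Type*} {s : Set α} (hs : s.Finite)
    (hcard : s.ncard ≤ 2) {x y : α} (hx : x ∈ s) (hy : y ∈ s) (hxy : x ≠ y) :
    s = {x, y} :=
  (Set.eq_of_subset_of_ncard_le (Set.insert_subset hx (Set.singleton_subset_iff.mpr hy))
    (by rwa [Set.ncard_pair hxy]) hs).symm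

theorem stmt_19_general {V : Type*} [Fintype V] (G : SimpleGraph V)
    (𝓑 : Set (Set V)) (hdef : 𝓑 = {S : Set V | ∃ x : V, S = graphBall G x 0 ∨ S = graphBall G x 1})
    (T : Set V → Set V) (hpos : IsPositiveMap 𝓑 T) (hnc : IsNonClashing 𝓑 T)
    (hdim : ∀ B ∈ 𝓑, (T B).ncard ≤ 2)
    (u v : V) (hsub : graphBall G u 1 ⊆ graphBall G v 1)
    (a b : V) (hdiff : graphBall G v 1 \ graphBall G u 1 = {a, b})
    (w : V) (hw : graphBall G w 1 ⊂ graphBall G v 1)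
    (c : V) (hc : graphBall G v 1 \ graphBall G w 1 = {c}) (hca : c ≠ a) (hcb : c ≠ b) :
    T (graphBall G v 1) = {c, a} ∨ T (graphBall G v 1) = {c, b} := by
  have hball : ∀ x, graphBall G x 1 ∈ 𝓑 := fun x => hdef ▸ ⟨x, Or.inr rfl⟩
  have hcT := hnc.mem_teach_of_diff_eq_singleton hpos (hball w) (hball v) hw hc
  have hpair := fun {x} (hx : x ∈ T (graphBall G v 1)) (hcx : c ≠ x) =>
    Set.eq_pair_of_ncard_le_two (Set.toFinite _) (hdim _ (hball v)) hcT hx hcx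
  rcases hnc.mem_teach_of_diff_eq_pair hpos (hball u) (hball v) hsub hdiff with haT | hbT
  exacts [Or.inl (hpair haT hca), Or.inr (hpair hbT hcb)]

/-- For `𝓑` the set of all balls of radius at most 1: if `B₁(u) ⊆ B₁(v)` with
`B₁(v) \ B₁(u) = {a, b}`, and some `w` has `B₁(w) ⊊ B₁(v)` with `B₁(v) \ B₁(w) = {c}`,
`c ∉ {a, b}`, and `T` has dimension at most 2, then `T(B₁(v)) = {c, a}` or `{c, b}`. -/
theorem stmt_19 {V : Type*} [Fintype V] (G : SimpleGraph V)
    (𝓑 : Set (Set V)) (hdef : 𝓑 = {S : Set V | ∃ x : V, S = graphBall G x 0 ∨ S = graphBall G x 1})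
    (T : Set V → Set V) (hpos : IsPositiveMap 𝓑 T) (hnc : IsNonClashing 𝓑 T)
    (hdim : ∀ B ∈ 𝓑, (T B).ncard ≤ 2)
    (u v : V) (huv : u ≠ v) (hsub : graphBall G u 1 ⊆ graphBall G v 1)
    (a b : V) (hab : a ≠ b) (hdiff : graphBall G v 1 \ graphBall G u 1 = {a, b})
    (w : V) (hw : graphBall G w 1 ⊂ graphBall G v 1)
    (c : V) (hc : graphBall G v 1 \ graphBall G w 1 = {c}) (hca : c ≠ a) (hcb : c ≠ b) :
    T (graphBall G v 1) = {c, a} ∨ T (graphBall G v 1) = {c, b} :=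
  stmt_19_general G 𝓑 hdef T hpos hnc hdim u v hsub a b hdiff w hw c hc hca hcb
end
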